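/- arXiv:1704.06341 — 3 statements merged into one kernel-verified Lean document; each statement's English description precedes it below -/
import Mathlib

section
/- Let F : ℝ × ℝᵏ × ℝ → ℝⁿ satisfy: (a) ‖F(t,u₁,ε) - F(t,u₂,ε)‖ ≤ L‖u₁ - u₂‖ for all t, u₁, u₂ and all ε, with L independent of ε; (b) ‖F(t,u,ε)‖ ≤ B for all t ∈ [τ,T], u in a fixed bounded set, and all ε; (c) for every fixed u ∈ ℝᵏ and every t ∈ [τ,T], ∫_τ^t F(s,u,ε) ds → ∫_τ^t F(s,u,ε₀) ds as ε → ε₀; (d) s ↦ F(s,u,ε₀) is continuous for each u. Let u_ε : [τ,T] → ℝᵏ be continuous with values in the fixed bounded set, converging uniformly on [τ,T] to u₀ as ε → ε₀. Then ∫_τ^t F(s,u_ε(s),ε) ds → ∫_τ^t F(s,u₀(s),ε₀) ds as ε → ε₀, for all t ∈ [τ,T]. -/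
/-!
Write `I_ε(w) = ∫_τ^t F(s, w(s), ε) ds`. Uniform Lipschitz continuity in the state makes
`w ↦ I_ε(w)` Lipschitz for the sup-distance, uniformly in `ε`, so `I_ε(u_ε) - I_ε(u₀) → 0`.
It remains to see that `ε ↦ I_ε(u₀)` is continuous at `ε₀`. Sampling `u₀` at the nodes of a fine
uniform partition gives a step function `w`, and `I_ε(w)` is a finite sum of increments of
`∫_τ^· F(s, x, ε) ds` with constant `x`, hence continuous at `ε₀` by the integral continuity
hypothesis. Since `u₀` is uniformly continuous, `I_ε(w) → I_ε(u₀)` uniformly in `ε` as the mesh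
goes to zero, and a uniform limit of functions continuous at `ε₀` is continuous at `ε₀`.
-/

open Filter MeasureTheory intervalIntegral Set Finset
open scoped Interval NNReal Topology

protected theorem TendstoUniformly.continuousAt {ι α β : Type*} [TopologicalSpace α]
    [UniformSpace β] {F : ι → α → β} {f : α → β} {p : Filter ι} [p.NeBot] {x : α}
    (h : TendstoUniformly F f p) (hc : ∀ᶠ n in p, ContinuousAt (F n) x) : ContinuousAt f x :=
  continuousAt_of_locally_uniform_approx_of_continuousAt fun _ hu =>
    let ⟨n, hn, hcn⟩ := ((h _ hu).and hc).exists
    ⟨univ, univ_mem, F n, hcn, fun y _ => hn y⟩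

theorem aestronglyMeasurable_comp_of_continuous {α E G : Type*} [MeasurableSpace α]
    {μ : Measure α} [TopologicalSpace E] [NormedAddCommGroup G] {F : α → E → G}
    (hF : ∀ x, AEStronglyMeasurable (fun s => F s x) μ) (hFc : ∀ s, Continuous (F s))
    {w : α → E} (hw : AEStronglyMeasurable w μ) :
    AEStronglyMeasurable (fun s => F s (w s)) μ := by
  have hsimple (g : SimpleFunc α E) : AEStronglyMeasurable (fun s => F s (g s)) μ := by
    have hg : (fun s => F s (g s)) = fun s => ∑ x ∈ g.range, (g ⁻¹' {x}).indicator (F · x) s := by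
      funext s
      rw [Finset.sum_eq_single_of_mem (g s) (g.mem_range_self s)
        fun x _ hx => indicator_of_notMem (fun h => hx h.symm) _,
        indicator_of_mem (s := g ⁻¹' {g s}) rfl]
    rw [hg]
    exact Finset.aestronglyMeasurable_fun_sum _ fun x _ =>
      (hF x).indicator (g.measurableSet_fiber x)
  have hmk := hw.stronglyMeasurable_mk
  refine (aestronglyMeasurable_of_tendsto_ae atTop (fun m => hsimple (hmk.approx m))
    (.of_forall fun s => ((hFc s).tendsto _).comp (hmk.tendsto_approx s))).congr ?_
  filter_upwards [hw.ae_eq_mk] with s hs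
  rw [hs]

noncomputable def uniformPartition (a b : ℝ) (m i : ℕ) : ℝ := a + i * ((b - a) / m)

section UniformPartition

variable {a b : ℝ} {m i : ℕ}

@[simp]
theorem uniformPartition_zero : uniformPartition a b m 0 = a := by
  simp [uniformPartition]

theorem uniformPartition_self (hm : m ≠ 0) : uniformPartition a b m m = b := by
  have : (m : ℝ) ≠ 0 := Nat.cast_ne_zero.2 hm
  simp only [uniformPartition]
  field_simp
  ring

theorem uniformPartition_succ_sub :
    uniformPartition a b m (i + 1) - uniformPartition a b m i = (b - a) / m := by
  simp only [uniformPartition]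
  push_cast
  ring

theorem monotone_uniformPartition (hab : a ≤ b) : Monotone (uniformPartition a b m) :=
  fun i j hij => by
    have : 0 ≤ (b - a) / m := div_nonneg (sub_nonneg.2 hab) m.cast_nonneg
    simp only [uniformPartition]
    gcongr

theorem uniformPartition_mem_Icc (hab : a ≤ b) (hi : i ≤ m) :
    uniformPartition a b m i ∈ Icc a b := by
  rcases eq_or_ne m 0 with rfl | hm
  · simp [Nat.le_zero.1 hi, hab]
  constructor
  · simpa using monotone_uniformPartition (m := m) hab (Nat.zero_le i)
  · simpa [uniformPartition_self hm] using monotone_uniformPartition (m := m) hab hi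

end UniformPartition

section LipschitzIntegrand

variable {E G : Type*} [NormedAddCommGroup E] [NormedAddCommGroup G] [NormedSpace ℝ G]

theorem eventually_forall_norm_sub_uniformPartition_le {w : ℝ → E} {a b η : ℝ} (hab : a ≤ b)
    (hw : ContinuousOn w (Icc a b)) (hη : 0 < η) :
    ∀ᶠ m in atTop, ∀ i < m, ∀ s ∈ Ioc (uniformPartition a b m i) (uniformPartition a b m (i + 1)),
      ‖w s - w (uniformPartition a b m i)‖ ≤ η := by
  obtain ⟨d, hd, hwd⟩ := Metric.uniformContinuousOn_iff.mp
    (isCompact_Icc.uniformContinuousOn_of_continuous hw) η hη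
  filter_upwards [(tendsto_const_div_atTop_nhds_zero_nat (b - a)).eventually (gt_mem_nhds hd)]
    with m hmesh i hi s hs
  have hpi := uniformPartition_mem_Icc hab hi.le
  have hpi' := uniformPartition_mem_Icc hab (Nat.succ_le_of_lt hi)
  have hdist : dist s (uniformPartition a b m i) < d := by
    rw [Real.dist_eq, abs_of_nonneg (sub_nonneg.2 hs.1.le)]
    linarith [uniformPartition_succ_sub (a := a) (b := b) (m := m) (i := i), hs.2]
  rw [← dist_eq_norm]
  exact (hwd s ⟨hpi.1.trans hs.1.le, hs.2.trans hpi'.2⟩ _ hpi hdist).le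

theorem norm_intervalIntegral_sub_le_of_lipschitzWith {F : ℝ → E → G} {L : ℝ≥0}
    (hF : ∀ s, LipschitzWith L (F s)) {w₁ w₂ : ℝ → E} {a b C : ℝ}
    (h₁ : IntervalIntegrable (fun s => F s (w₁ s)) volume a b)
    (h₂ : IntervalIntegrable (fun s => F s (w₂ s)) volume a b)
    (hC : ∀ s ∈ Ι a b, ‖w₁ s - w₂ s‖ ≤ C) :
    ‖(∫ s in a..b, F s (w₁ s)) - ∫ s in a..b, F s (w₂ s)‖ ≤ L * C * |b - a| := by
  rw [← intervalIntegral.integral_sub h₁ h₂]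
  refine norm_integral_le_of_norm_le_const fun s hs => ?_
  calc ‖F s (w₁ s) - F s (w₂ s)‖ ≤ L * ‖w₁ s - w₂ s‖ := (hF s).norm_sub_le _ _
    _ ≤ L * C := by gcongr; exact hC s hs

theorem norm_intervalIntegral_sub_sum_le {F : ℝ → E → G} {L : ℝ≥0}
    (hF : ∀ s, LipschitzWith L (F s)) {w : ℝ → E} {p : ℕ → ℝ} {N : ℕ} {η : ℝ} (hp : Monotone p)
    (hFw : ∀ i < N, IntervalIntegrable (fun s => F s (w s)) volume (p i) (p (i + 1)))
    (hFc : ∀ i < N, IntervalIntegrable (fun s => F s (w (p i))) volume (p i) (p (i + 1)))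
    (hη : ∀ i < N, ∀ s ∈ Ioc (p i) (p (i + 1)), ‖w s - w (p i)‖ ≤ η) :
    ‖(∫ s in p 0..p N, F s (w s)) - ∑ i ∈ range N, ∫ s in p i..p (i + 1), F s (w (p i))‖ ≤
      L * η * (p N - p 0) := by
  rw [← sum_integral_adjacent_intervals hFw, ← Finset.sum_sub_distrib, ← Finset.sum_range_sub p N,
    Finset.mul_sum]
  refine (norm_sum_le _ _).trans (Finset.sum_le_sum fun i hi => ?_)
  have hi := Finset.mem_range.mp hi
  have hle : p i ≤ p (i + 1) := hp i.le_succ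
  calc _ ≤ L * η * |p (i + 1) - p i| := norm_intervalIntegral_sub_le_of_lipschitzWith hF
        (hFw i hi) (hFc i hi) (by simpa only [uIoc_of_le hle] using hη i hi)
    _ = L * η * (p (i + 1) - p i) := by rw [abs_of_nonneg (sub_nonneg.2 hle)]

variable {ι : Type*} {F : ℝ → E → ι → G} {L : ℝ≥0} {a b : ℝ}

theorem tendsto_intervalIntegral_sub_of_tendstoUniformlyOn {l : Filter ι}
    (hF : ∀ s ε, LipschitzWith L fun x => F s x ε) {u : ι → ℝ → E} {u₀ : ℝ → E} (hab : a ≤ b)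
    (hu : TendstoUniformlyOn u u₀ l (Icc a b))
    (hFu : ∀ ε, IntegrableOn (fun s => F s (u ε s) ε) (Icc a b))
    (hFu₀ : ∀ ε, IntegrableOn (fun s => F s (u₀ s) ε) (Icc a b)) :
    Tendsto (fun ε => (∫ s in a..b, F s (u ε s) ε) - ∫ s in a..b, F s (u₀ s) ε) l (𝓝 0) := by
  rw [Metric.tendsto_nhds]
  intro δ hδ
  obtain ⟨η, hη, hLη⟩ := exists_pos_mul_lt hδ (L * (b - a))
  filter_upwards [Metric.tendstoUniformlyOn_iff.mp hu η hη] with ε hε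
  have hclose : ∀ s ∈ Ι a b, ‖u ε s - u₀ s‖ ≤ η := fun s hs => by
    rw [norm_sub_rev, ← dist_eq_norm]
    exact (hε s (Ioc_subset_Icc_self (uIoc_of_le hab ▸ hs))).le
  rw [dist_zero_right]
  calc _ ≤ L * η * |b - a| := norm_intervalIntegral_sub_le_of_lipschitzWith (fun s => hF s ε)
        ((intervalIntegrable_iff_integrableOn_Icc_of_le hab).2 (hFu ε))
        ((intervalIntegrable_iff_integrableOn_Icc_of_le hab).2 (hFu₀ ε)) hclose
    _ = L * (b - a) * η := by rw [abs_of_nonneg (sub_nonneg.2 hab)]; ring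
    _ < δ := hLη

theorem tendstoUniformly_sum_intervalIntegral_uniformPartition
    (hF : ∀ s ε, LipschitzWith L fun x => F s x ε) {w : ℝ → E} (hab : a ≤ b)
    (hw : ContinuousOn w (Icc a b)) (hFw : ∀ ε, IntegrableOn (fun s => F s (w s) ε) (Icc a b))
    (hFc : ∀ ε, ∀ x ∈ Icc a b, IntegrableOn (fun s => F s (w x) ε) (Icc a b)) :
    TendstoUniformly
      (fun m ε => ∑ i ∈ range m, ∫ s in uniformPartition a b m i..uniformPartition a b m (i + 1),
        F s (w (uniformPartition a b m i)) ε)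
      (fun ε => ∫ s in a..b, F s (w s) ε) atTop := by
  rw [Metric.tendstoUniformly_iff]
  intro δ hδ
  obtain ⟨η, hη, hLη⟩ := exists_pos_mul_lt hδ (L * (b - a))
  filter_upwards [eventually_forall_norm_sub_uniformPartition_le hab hw hη,
    eventually_ne_atTop 0] with m hosc hm ε
  have hsub : ∀ i < m, [[uniformPartition a b m i, uniformPartition a b m (i + 1)]] ⊆ Icc a b :=
    fun i hi => uIcc_subset_Icc (uniformPartition_mem_Icc hab hi.le)
      (uniformPartition_mem_Icc hab hi)
  have hsum := norm_intervalIntegral_sub_sum_le (fun s => hF s ε) (monotone_uniformPartition hab)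
    (fun i hi => ((hFw ε).mono_set (hsub i hi)).intervalIntegrable)
    (fun i hi => ((hFc ε _ (uniformPartition_mem_Icc hab hi.le)).mono_set
      (hsub i hi)).intervalIntegrable) hosc
  rw [uniformPartition_zero, uniformPartition_self hm] at hsum
  rw [dist_eq_norm]
  calc _ ≤ L * η * (b - a) := hsum
    _ = L * (b - a) * η := by ring
    _ < δ := hLη

theorem continuousAt_intervalIntegral_of_continuousAt_const [TopologicalSpace ι] {ε₀ : ι}
    (hF : ∀ s ε, LipschitzWith L fun x => F s x ε) {w : ℝ → E} (hab : a ≤ b)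
    (hw : ContinuousOn w (Icc a b)) (hFw : ∀ ε, IntegrableOn (fun s => F s (w s) ε) (Icc a b))
    (hFc : ∀ ε, ∀ x ∈ Icc a b, IntegrableOn (fun s => F s (w x) ε) (Icc a b))
    (hcont : ∀ x ∈ Icc a b, ∀ t ∈ Icc a b,
      ContinuousAt (fun ε => ∫ s in a..t, F s (w x) ε) ε₀) :
    ContinuousAt (fun ε => ∫ s in a..b, F s (w s) ε) ε₀ := by
  refine (tendstoUniformly_sum_intervalIntegral_uniformPartition hF hab hw hFw hFc).continuousAt
    (.of_forall fun m => tendsto_finsetSum _ fun i hi => ?_)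
  have hi := Finset.mem_range.mp hi
  have hp : ∀ j ≤ m, uniformPartition a b m j ∈ Icc a b := fun j hj =>
    uniformPartition_mem_Icc hab hj
  have hint : ∀ j ≤ m, ∀ ε, IntervalIntegrable (fun s => F s (w (uniformPartition a b m i)) ε)
      volume a (uniformPartition a b m j) := fun j hj ε =>
    ((hFc ε _ (hp i hi.le)).mono_set
      (uIcc_subset_Icc (left_mem_Icc.2 hab) (hp j hj))).intervalIntegrable
  refine ((hcont _ (hp i hi.le) _ (hp _ hi)).sub (hcont _ (hp i hi.le) _ (hp i hi.le))).congr
    (.of_forall fun ε => ?_)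
  exact integral_interval_sub_left (hint _ hi ε) (hint _ hi.le ε)

end LipschitzIntegrand

theorem stmt13_general (n k : ℕ) (τ T L B ε₀ : ℝ)
    (F : ℝ → EuclideanSpace ℝ (Fin k) → ℝ → EuclideanSpace ℝ (Fin n))
    (K : Set (EuclideanSpace ℝ (Fin k)))
    (hLip : ∀ (t : ℝ) (u₁ u₂ : EuclideanSpace ℝ (Fin k)) (ε : ℝ),
      ‖F t u₁ ε - F t u₂ ε‖ ≤ L * ‖u₁ - u₂‖)
    (hB : ∀ t ∈ Icc τ T, ∀ u ∈ K, ∀ ε : ℝ, ‖F t u ε‖ ≤ B)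
    (hmeas : ∀ (ε : ℝ) (u : EuclideanSpace ℝ (Fin k)),
      AEStronglyMeasurable (fun s => F s u ε) (volume.restrict (Icc τ T)))
    (hic : ∀ (u : EuclideanSpace ℝ (Fin k)), ∀ t ∈ Icc τ T,
      Tendsto (fun ε : ℝ => ∫ s in τ..t, F s u ε) (nhds ε₀)
        (nhds (∫ s in τ..t, F s u ε₀)))
    (u : ℝ → ℝ → EuclideanSpace ℝ (Fin k)) (u₀ : ℝ → EuclideanSpace ℝ (Fin k))
    (hucont : ∀ ε, ContinuousOn (u ε) (Icc τ T))
    (huK : ∀ ε, ∀ t ∈ Icc τ T, u ε t ∈ K)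
    (hu₀K : ∀ t ∈ Icc τ T, u₀ t ∈ K)
    (huconv : TendstoUniformlyOn u u₀ (nhds ε₀) (Icc τ T)) :
    ∀ t ∈ Icc τ T,
      Tendsto (fun ε : ℝ => ∫ s in τ..t, F s (u ε s) ε) (nhds ε₀)
        (nhds (∫ s in τ..t, F s (u₀ s) ε₀)) := by
  intro t ht
  have hsub : Icc τ t ⊆ Icc τ T := Icc_subset_Icc_right ht.2
  have hFlip : ∀ s ε, LipschitzWith L.toNNReal fun x => F s x ε := fun s ε =>
    .of_dist_le' fun x y => by simpa only [dist_eq_norm] using hLip s x y ε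
  have hint : ∀ ε (w : ℝ → EuclideanSpace ℝ (Fin k)), ContinuousOn w (Icc τ T) →
      (∀ s ∈ Icc τ T, w s ∈ K) → IntegrableOn (fun s => F s (w s) ε) (Icc τ t) :=
    fun ε w hw hwK => by
      refine IntegrableOn.mono_set (integrableOn_univ.1 ?_) hsub
      refine Measure.integrableOn_of_bounded (by simp) (M := B)
        (aestronglyMeasurable_comp_of_continuous (hmeas ε) (fun s => (hFlip s ε).continuous)
          (hw.aestronglyMeasurable measurableSet_Icc)) ?_
      rw [Measure.restrict_univ]
      exact ae_restrict_of_forall_mem measurableSet_Icc fun s hs => hB s hs _ (hwK s hs) ε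
  have hu₀ : ContinuousOn u₀ (Icc τ T) := huconv.continuousOn (.of_forall hucont)
  have hclose := tendsto_intervalIntegral_sub_of_tendstoUniformlyOn hFlip ht.1 (huconv.mono hsub)
    (fun ε => hint ε _ (hucont ε) (huK ε)) (fun ε => hint ε _ hu₀ hu₀K)
  have hcont := continuousAt_intervalIntegral_of_continuousAt_const hFlip ht.1 (hu₀.mono hsub)
    (fun ε => hint ε _ hu₀ hu₀K)
    (fun ε x hx => hint ε _ continuousOn_const fun _ _ => hu₀K x (hsub hx))
    fun x _ t' ht' => hic _ t' (hsub ht')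
  simpa using hclose.add hcont

/-- Krasnoselskii–Krein theorem on passage to the limit in integrals. -/
theorem stmt13 (n k : ℕ) (τ T L B ε₀ : ℝ) (hτT : τ ≤ T) (hL : 0 ≤ L)
    (F : ℝ → EuclideanSpace ℝ (Fin k) → ℝ → EuclideanSpace ℝ (Fin n))
    (K : Set (EuclideanSpace ℝ (Fin k))) (hK : Bornology.IsBounded K)
    (hLip : ∀ (t : ℝ) (u₁ u₂ : EuclideanSpace ℝ (Fin k)) (ε : ℝ),
      ‖F t u₁ ε - F t u₂ ε‖ ≤ L * ‖u₁ - u₂‖)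
    (hB : ∀ t ∈ Icc τ T, ∀ u ∈ K, ∀ ε : ℝ, ‖F t u ε‖ ≤ B)
    (hmeas : ∀ (ε : ℝ) (u : EuclideanSpace ℝ (Fin k)),
      AEStronglyMeasurable (fun s => F s u ε) (volume.restrict (Icc τ T)))
    (hic : ∀ (u : EuclideanSpace ℝ (Fin k)), ∀ t ∈ Icc τ T,
      Tendsto (fun ε : ℝ => ∫ s in τ..t, F s u ε) (nhds ε₀)
        (nhds (∫ s in τ..t, F s u ε₀)))
    (hcont0 : ∀ u : EuclideanSpace ℝ (Fin k), Continuous fun s => F s u ε₀)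
    (u : ℝ → ℝ → EuclideanSpace ℝ (Fin k)) (u₀ : ℝ → EuclideanSpace ℝ (Fin k))
    (hucont : ∀ ε, ContinuousOn (u ε) (Icc τ T))
    (huK : ∀ ε, ∀ t ∈ Icc τ T, u ε t ∈ K)
    (hu₀K : ∀ t ∈ Icc τ T, u₀ t ∈ K)
    (huconv : TendstoUniformlyOn u u₀ (nhds ε₀) (Icc τ T)) :
    ∀ t ∈ Icc τ T,
      Tendsto (fun ε : ℝ => ∫ s in τ..t, F s (u ε s) ε) (nhds ε₀)
        (nhds (∫ s in τ..t, F s (u₀ s) ε₀)) :=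
  stmt13_general n k τ T L B ε₀ F K hLip hB hmeas hic u u₀ hucont huK hu₀K huconv
end

section
/- Let g : ℝ × ℝⁿ → ℝⁿ be almost periodic in t (uniformly for x in bounded sets) with uniform mean g₀(x) = lim_{T→∞}(1/T)∫₀ᵀ g(τ,x)dτ, where the limit is uniform in the starting point a of the averaging window. Define f(t,x,ε) = g(t/ε, x) for ε ≠ 0 and f(t,x,0) = g₀(x). Then f is integrally continuous at ε = 0: for all τ, t ∈ ℝ and x ∈ ℝⁿ, lim_{ε→0} ∫_τ^t f(s,x,ε) ds = ∫_τ^t f(s,x,0) ds = (t-τ)·g₀(x). -/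
/-!
Substituting `σ = s / ε` turns `∫_τ^t g(s/ε, x) ds` into `(t - τ)` times the average of
`g(·, x)` over the window between `τ/ε` and `t/ε`. That window has length `|t - τ| / |ε| → ∞`,
and since the mean exists uniformly in the window's position, the average tends to `g₀ x`.
-/

open Filter intervalIntegral Set Topology

section UniformMean

variable {E : Type*} [NormedAddCommGroup E] [NormedSpace ℝ E] {h : ℝ → E} {m : E}

theorem average_integral_symm (a b : ℝ) :
    (a - b)⁻¹ • ∫ σ in b..a, h σ = (b - a)⁻¹ • ∫ σ in a..b, h σ := by
  rw [integral_symm, smul_neg, ← neg_smul, ← inv_neg, neg_sub]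

theorem tendsto_average_integral_of_tendstoUniformly
    (hm : TendstoUniformly (fun T a => T⁻¹ • ∫ σ in a..a + T, h σ) (fun _ => m) atTop) :
    Tendsto (fun p : ℝ × ℝ => (p.2 - p.1)⁻¹ • ∫ σ in p.1..p.2, h σ)
      (comap (fun p : ℝ × ℝ => |p.2 - p.1|) atTop) (𝓝 m) := by
  rw [Metric.tendsto_nhds]
  intro δ hδ
  obtain ⟨T₀, hT₀⟩ := eventually_atTop.1 (Metric.tendstoUniformly_iff.1 hm δ hδ)
  filter_upwards [preimage_mem_comap (Ici_mem_atTop T₀)] with ⟨a, b⟩ (hab : T₀ ≤ |b - a|)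
  rw [dist_comm]
  rcases le_total a b with hle | hle
  · rw [abs_of_nonneg (sub_nonneg.2 hle)] at hab
    simpa using hT₀ _ hab a
  · rw [abs_sub_comm, abs_of_nonneg (sub_nonneg.2 hle)] at hab
    simpa [average_integral_symm] using hT₀ _ hab b

theorem tendsto_integral_comp_div_of_tendstoUniformly
    (hm : TendstoUniformly (fun T a => T⁻¹ • ∫ σ in a..a + T, h σ) (fun _ => m) atTop)
    (τ t : ℝ) :
    Tendsto (fun ε => ∫ s in τ..t, h (s / ε)) (𝓝[≠] 0) (𝓝 ((t - τ) • m)) := by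
  rcases eq_or_ne t τ with rfl | htτ
  · simp only [integral_same, sub_self, zero_smul]
    exact tendsto_const_nhds
  have hscale : ∀ ε ≠ (0 : ℝ), ∫ s in τ..t, h (s / ε) =
      (t - τ) • ((t / ε - τ / ε)⁻¹ • ∫ σ in τ / ε..t / ε, h σ) := by
    intro ε hε
    rw [integral_comp_div _ hε, smul_smul, ← sub_div, inv_div,
      mul_div_cancel₀ _ (sub_ne_zero.2 htτ)]
  have hwindow : Tendsto (fun ε : ℝ => (τ / ε, t / ε)) (𝓝[≠] 0)
      (comap (fun p : ℝ × ℝ => |p.2 - p.1|) atTop) := by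
    refine tendsto_comap_iff.2 ?_
    have := (tendsto_norm_inv_nhdsNE_zero_atTop (α := ℝ)).const_mul_atTop
      (abs_pos.2 (sub_ne_zero.2 htτ))
    refine this.congr fun ε => ?_
    rw [Function.comp_apply, ← sub_div, abs_div, Real.norm_eq_abs, abs_inv, div_eq_mul_inv]
  refine Tendsto.congr' ?_ (((tendsto_average_integral_of_tendstoUniformly hm).comp
    hwindow).const_smul (t - τ))
  filter_upwards [self_mem_nhdsWithin] with ε hε
  exact (hscale ε hε).symm

end UniformMean

theorem stmt14_general (n : ℕ)
    (g : ℝ → EuclideanSpace ℝ (Fin n) → EuclideanSpace ℝ (Fin n))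
    (g₀ : EuclideanSpace ℝ (Fin n) → EuclideanSpace ℝ (Fin n))
    (hmean : ∀ x : EuclideanSpace ℝ (Fin n), ∀ δ > (0:ℝ), ∃ T₀ > (0:ℝ),
      ∀ T ≥ T₀, ∀ a : ℝ, ‖(1 / T) • (∫ σ in a..(a + T), g σ x) - g₀ x‖ < δ)
    (f : ℝ → EuclideanSpace ℝ (Fin n) → ℝ → EuclideanSpace ℝ (Fin n))
    (hf : ∀ t x ε, f t x ε = if ε = 0 then g₀ x else g (t / ε) x) :
    ∀ (τ t : ℝ) (x : EuclideanSpace ℝ (Fin n)),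
      Tendsto (fun ε : ℝ => ∫ s in τ..t, f s x ε)
        (nhdsWithin 0 {(0:ℝ)}ᶜ) (nhds (∫ s in τ..t, f s x 0)) ∧
      (∫ s in τ..t, f s x 0) = (t - τ) • g₀ x := by
  intro τ t x
  have hmean_x : TendstoUniformly (fun T a => T⁻¹ • ∫ σ in a..a + T, g σ x)
      (fun _ => g₀ x) atTop := by
    refine Metric.tendstoUniformly_iff.2 fun δ hδ => ?_
    obtain ⟨T₀, -, hT₀⟩ := hmean x δ hδ
    filter_upwards [Ici_mem_atTop T₀] with T hT a
    rw [dist_comm, dist_eq_norm, ← one_div]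
    exact hT₀ T hT a
  have hlimit : (∫ s in τ..t, f s x 0) = (t - τ) • g₀ x := by simp [hf]
  refine ⟨?_, hlimit⟩
  rw [hlimit]
  refine (tendsto_integral_comp_div_of_tendstoUniformly hmean_x τ t).congr' ?_
  filter_upwards [self_mem_nhdsWithin] with ε (hε : ε ≠ 0)
  simp [hf, hε]

/-- Integral continuity at ε = 0 of the high-frequency family f(t,x,ε) =
g(t/ε, x), f(t,x,0) = g₀(x), for g almost periodic in t with uniform mean. -/
theorem stmt14 (n : ℕ)
    (g : ℝ → EuclideanSpace ℝ (Fin n) → EuclideanSpace ℝ (Fin n))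
    (g₀ : EuclideanSpace ℝ (Fin n) → EuclideanSpace ℝ (Fin n))
    (hcont : ∀ x, Continuous fun t => g t x)
    (hap : ∀ x : EuclideanSpace ℝ (Fin n), ∀ ε > (0:ℝ), ∃ p > (0:ℝ), ∀ a : ℝ,
      ∃ s ∈ Icc a (a + p), ∀ u : ℝ, ‖g (u + s) x - g u x‖ < ε)
    (hmean : ∀ x : EuclideanSpace ℝ (Fin n), ∀ δ > (0:ℝ), ∃ T₀ > (0:ℝ),
      ∀ T ≥ T₀, ∀ a : ℝ, ‖(1 / T) • (∫ σ in a..(a + T), g σ x) - g₀ x‖ < δ)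
    (f : ℝ → EuclideanSpace ℝ (Fin n) → ℝ → EuclideanSpace ℝ (Fin n))
    (hf : ∀ t x ε, f t x ε = if ε = 0 then g₀ x else g (t / ε) x) :
    ∀ (τ t : ℝ) (x : EuclideanSpace ℝ (Fin n)),
      Tendsto (fun ε : ℝ => ∫ s in τ..t, f s x ε)
        (nhdsWithin 0 {(0:ℝ)}ᶜ) (nhds (∫ s in τ..t, f s x 0)) ∧
      (∫ s in τ..t, f s x 0) = (t - τ) • g₀ x :=
  stmt14_general n g g₀ hmean f hf
end

section
/- Let α > 0 and let f : ℝ × ℝⁿ → ℝⁿ satisfy ⟨f(t,x₁) - f(t,x₂), x₁ - x₂⟩ ≥ α‖x₁ - x₂‖². Let C(t) ⊆ ℝⁿ be convex for each t, and let x₁, x₂ : [t₀,∞) → ℝⁿ be absolutely continuous functions with x_i(t) ∈ C(t) such that for almost all t, -x_i'(t) - f(t,x_i(t)) ∈ N_{C(t)}(x_i(t)) for i = 1,2, where N_C(x) = {ξ : ⟨ξ, c - x⟩ ≤ 0 for all c ∈ C}. Then ‖x₁(t) - x₂(t)‖² ≤ e^{-2α(t-t₀)}·‖x₁(t₀) -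 x₂(t₀)‖² for all t ≥ t₀. -/
open MeasureTheory intervalIntegral Set Filter
open scoped RealInnerProductSpace

/-! Subtracting the two normal-cone inclusions and using the monotonicity of the normal cone
gives `⟪x₁ - x₂, x₁' - x₂'⟫ ≤ -α ‖x₁ - x₂‖²` almost everywhere, i.e. `φ' ≤ -2αφ` for
`φ = ‖x₁ - x₂‖²`. Since `φ` is absolutely continuous, `e^{2αt} φ(t)` is absolutely continuous
with a.e. nonpositive derivative, hence nonincreasing by the fundamental theorem of calculus. -/

section AbsolutelyContinuous

variable {X Y : Type*} [PseudoMetricSpace X] [PseudoMetricSpace Y]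

theorem LipschitzWith.comp_absolutelyContinuousOnInterval {g : X → Y} {K : NNReal}
    (hg : LipschitzWith K g) {f : ℝ → X} {a b : ℝ} (hf : AbsolutelyContinuousOnInterval f a b) :
    AbsolutelyContinuousOnInterval (g ∘ f) a b := by
  unfold AbsolutelyContinuousOnInterval at hf ⊢
  refine squeeze_zero (fun _ ↦ Finset.sum_nonneg fun _ _ ↦ dist_nonneg) (fun E ↦ ?_)
    (by simpa using hf.const_mul (K : ℝ))
  rw [Finset.mul_sum]
  exact Finset.sum_le_sum fun i _ ↦ hg.dist_le_mul _ _

variable {E : Type*} [NormedAddCommGroup E] [NormedSpace ℝ E]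

theorem absolutelyContinuousOnInterval_of_eq_add_intervalIntegral {u u' : ℝ → E} {a b : ℝ}
    (hu' : IntervalIntegrable u' volume a b)
    (hu : ∀ x ∈ uIcc a b, u x = u a + ∫ s in a..x, u' s) :
    AbsolutelyContinuousOnInterval u a b := by
  -- `dist (u p) (u q) ≤ dist (N p) (N q)` for the real primitive `N` of `‖u'‖`
  have hN := hu'.norm.absolutelyContinuousOnInterval_intervalIntegral left_mem_uIcc
  unfold AbsolutelyContinuousOnInterval at hN ⊢
  refine squeeze_zero' (Eventually.of_forall fun _ ↦ Finset.sum_nonneg fun _ _ ↦ dist_nonneg)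
    ?_ hN
  filter_upwards [eventually_inf_principal.mpr (Eventually.of_forall fun _ h ↦ h)]
    with ⟨n, I⟩ hI
  refine Finset.sum_le_sum fun i hi ↦ ?_
  obtain ⟨hp, hq⟩ := hI.1 i hi
  have hint : ∀ x ∈ uIcc a b, IntervalIntegrable u' volume a x :=
    fun x hx ↦ hu'.mono_set (uIcc_subset_uIcc left_mem_uIcc hx)
  have hint_norm : ∀ x ∈ uIcc a b, IntervalIntegrable (‖u' ·‖) volume a x :=
    fun x hx ↦ (hint x hx).norm
  calc dist (u (I i).1) (u (I i).2)
      = ‖∫ s in (I i).2..(I i).1, u' s‖ := by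
        rw [dist_eq_norm, hu _ hp, hu _ hq, add_sub_add_left_eq_sub,
          integral_interval_sub_left (hint _ hp) (hint _ hq)]
    _ ≤ |∫ s in (I i).2..(I i).1, ‖u' s‖| := norm_integral_le_abs_integral_norm
    _ = dist (∫ s in a..(I i).1, ‖u' s‖) (∫ s in a..(I i).2, ‖u' s‖) := by
        rw [Real.dist_eq, integral_interval_sub_left (hint_norm _ hp) (hint_norm _ hq)]

theorem AbsolutelyContinuousOnInterval.le_of_ae_deriv_nonpos {f : ℝ → ℝ} {a b : ℝ}
    (hab : a ≤ b) (hf : AbsolutelyContinuousOnInterval f a b)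
    (hf' : ∀ᵐ x, x ∈ Icc a b → deriv f x ≤ 0) : f b ≤ f a := by
  have hnonneg : ∀ᵐ x ∂volume.restrict (Icc a b), 0 ≤ -deriv f x :=
    (ae_restrict_iff' measurableSet_Icc).mpr (hf'.mono fun x hx hmem ↦ neg_nonneg.mpr (hx hmem))
  have h := integral_nonneg_of_ae_restrict hab hnonneg
  rw [intervalIntegral.integral_neg, hf.integral_deriv_eq_sub] at h
  linarith

theorem AbsolutelyContinuousOnInterval.le_exp_mul_of_ae_hasDerivAt_le {φ φ' : ℝ → ℝ} {a b c : ℝ}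
    (hab : a ≤ b) (hφ : AbsolutelyContinuousOnInterval φ a b)
    (hderiv : ∀ᵐ x, x ∈ Icc a b → HasDerivAt φ (φ' x) x)
    (hle : ∀ᵐ x, x ∈ Icc a b → φ' x ≤ c * φ x) :
    φ b ≤ Real.exp (c * (b - a)) * φ a := by
  have hexp : AbsolutelyContinuousOnInterval (fun x ↦ Real.exp (-c * x)) a b :=
    ContDiffOn.absolutelyContinuousOnInterval (by fun_prop)
  have hψ := (hexp.fun_mul hφ).le_of_ae_deriv_nonpos hab (by
    filter_upwards [hderiv, hle] with x hd hl hx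
    have hψ' := (((hasDerivAt_id x).const_mul (-c)).exp.fun_mul (hd hx)).deriv
    simp only [id, mul_one] at hψ'
    rw [hψ']
    nlinarith [Real.exp_pos (-c * x), hl hx])
  rw [show c * (b - a) = -c * a - (-c * b) by ring, Real.exp_sub, div_mul_eq_mul_div,
    le_div_iff₀ (Real.exp_pos _)]
  linarith

end AbsolutelyContinuous

section NormalCone

variable {E : Type*} [NormedAddCommGroup E] [InnerProductSpace ℝ E]

def normalCone (C : Set E) (x : E) : Set E := {ξ | ∀ c ∈ C, ⟪ξ, c - x⟫ ≤ 0}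

theorem inner_sub_sub_nonneg_of_mem_normalCone {C : Set E} {x₁ x₂ ξ₁ ξ₂ : E}
    (hx₁ : x₁ ∈ C) (hx₂ : x₂ ∈ C) (hξ₁ : ξ₁ ∈ normalCone C x₁) (hξ₂ : ξ₂ ∈ normalCone C x₂) :
    0 ≤ ⟪ξ₁ - ξ₂, x₁ - x₂⟫ := by
  have h₁ := hξ₁ x₂ hx₂
  have h₂ := hξ₂ x₁ hx₁
  rw [← neg_sub x₁ x₂, inner_neg_right] at h₁
  rw [inner_sub_left]
  linarith

theorem inner_sub_le_neg_mul_norm_sq_of_mem_normalCone {C : Set E} {α : ℝ}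
    {z₁ z₂ v₁ v₂ w₁ w₂ : E} (hz₁ : z₁ ∈ C) (hz₂ : z₂ ∈ C)
    (hmono : α * ‖z₁ - z₂‖ ^ 2 ≤ ⟪w₁ - w₂, z₁ - z₂⟫)
    (h₁ : -v₁ - w₁ ∈ normalCone C z₁) (h₂ : -v₂ - w₂ ∈ normalCone C z₂) :
    ⟪z₁ - z₂, v₁ - v₂⟫ ≤ -α * ‖z₁ - z₂‖ ^ 2 := by
  have h := inner_sub_sub_nonneg_of_mem_normalCone hz₁ hz₂ h₁ h₂
  rw [show -v₁ - w₁ - (-v₂ - w₂) = -((v₁ - v₂) + (w₁ - w₂)) by abel, inner_neg_left,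
    inner_add_left, real_inner_comm] at h
  linarith

end NormalCone

theorem stmt16_general (n : ℕ) (α t₀ : ℝ)
    (f : ℝ → EuclideanSpace ℝ (Fin n) → EuclideanSpace ℝ (Fin n))
    (C : ℝ → Set (EuclideanSpace ℝ (Fin n)))
    (hmono : ∀ (t : ℝ) (y₁ y₂ : EuclideanSpace ℝ (Fin n)),
      α * ‖y₁ - y₂‖ ^ 2 ≤ inner ℝ (f t y₁ - f t y₂) (y₁ - y₂))
    (x₁ x₂ x₁' x₂' : ℝ → EuclideanSpace ℝ (Fin n))
    (hmem₁ : ∀ t, t₀ ≤ t → x₁ t ∈ C t) (hmem₂ : ∀ t, t₀ ≤ t → x₂ t ∈ C t)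
    (hint₁ : ∀ t, t₀ ≤ t → IntervalIntegrable x₁' volume t₀ t)
    (hint₂ : ∀ t, t₀ ≤ t → IntervalIntegrable x₂' volume t₀ t)
    (hderiv₁ : ∀ᵐ t, t₀ ≤ t → HasDerivAt x₁ (x₁' t) t)
    (hderiv₂ : ∀ᵐ t, t₀ ≤ t → HasDerivAt x₂ (x₂' t) t)
    (hftc₁ : ∀ t, t₀ ≤ t → x₁ t = x₁ t₀ + ∫ s in t₀..t, x₁' s)
    (hftc₂ : ∀ t, t₀ ≤ t → x₂ t = x₂ t₀ + ∫ s in t₀..t, x₂' s)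
    (hincl₁ : ∀ᵐ t, t₀ ≤ t → ∀ c ∈ C t,
      (inner ℝ (-x₁' t - f t (x₁ t)) (c - x₁ t) : ℝ) ≤ 0)
    (hincl₂ : ∀ᵐ t, t₀ ≤ t → ∀ c ∈ C t,
      (inner ℝ (-x₂' t - f t (x₂ t)) (c - x₂ t) : ℝ) ≤ 0) :
    ∀ t, t₀ ≤ t → ‖x₁ t - x₂ t‖ ^ 2 ≤
      Real.exp (-2 * α * (t - t₀)) * ‖x₁ t₀ - x₂ t₀‖ ^ 2 := by
  intro t ht
  have hdiff : AbsolutelyContinuousOnInterval (fun s ↦ x₁ s - x₂ s) t₀ t := by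
    refine absolutelyContinuousOnInterval_of_eq_add_intervalIntegral
      ((hint₁ t ht).sub (hint₂ t ht)) fun s hs ↦ ?_
    rw [uIcc_of_le ht] at hs
    rw [integral_sub (hint₁ s hs.1) (hint₂ s hs.1), hftc₁ s hs.1, hftc₂ s hs.1]
    abel
  have hnorm := lipschitzWith_one_norm.comp_absolutelyContinuousOnInterval hdiff
  have hsq : AbsolutelyContinuousOnInterval (fun s ↦ ‖x₁ s - x₂ s‖ ^ 2) t₀ t := by
    simpa only [Function.comp_def, sq] using hnorm.fun_mul hnorm
  refine hsq.le_exp_mul_of_ae_hasDerivAt_le (φ' := fun s ↦ 2 * ⟪x₁ s - x₂ s, x₁' s - x₂' s⟫)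
    ht ?_ ?_
  · filter_upwards [hderiv₁, hderiv₂] with s h₁ h₂ hs
    exact ((h₁ hs.1).sub (h₂ hs.1)).norm_sq
  · filter_upwards [hincl₁, hincl₂] with s h₁ h₂ hs
    have hdecay := inner_sub_le_neg_mul_norm_sq_of_mem_normalCone (hmem₁ s hs.1) (hmem₂ s hs.1)
      (hmono s _ _) (h₁ hs.1) (h₂ hs.1)
    linarith

/-- Incremental exponential stability of monotone perturbed sweeping
processes (Step 1 of Theorem 2.3). -/
theorem stmt16 (n : ℕ) (α t₀ : ℝ) (hα : 0 < α)
    (f : ℝ → EuclideanSpace ℝ (Fin n) → EuclideanSpace ℝ (Fin n))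
    (C : ℝ → Set (EuclideanSpace ℝ (Fin n)))
    (hCconv : ∀ t, Convex ℝ (C t))
    (hmono : ∀ (t : ℝ) (y₁ y₂ : EuclideanSpace ℝ (Fin n)),
      α * ‖y₁ - y₂‖ ^ 2 ≤ inner ℝ (f t y₁ - f t y₂) (y₁ - y₂))
    (x₁ x₂ x₁' x₂' : ℝ → EuclideanSpace ℝ (Fin n))
    (hmem₁ : ∀ t, t₀ ≤ t → x₁ t ∈ C t) (hmem₂ : ∀ t, t₀ ≤ t → x₂ t ∈ C t)
    (hint₁ : ∀ t, t₀ ≤ t → IntervalIntegrable x₁' volume t₀ t)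
    (hint₂ : ∀ t, t₀ ≤ t → IntervalIntegrable x₂' volume t₀ t)
    (hderiv₁ : ∀ᵐ t, t₀ ≤ t → HasDerivAt x₁ (x₁' t) t)
    (hderiv₂ : ∀ᵐ t, t₀ ≤ t → HasDerivAt x₂ (x₂' t) t)
    (hftc₁ : ∀ t, t₀ ≤ t → x₁ t = x₁ t₀ + ∫ s in t₀..t, x₁' s)
    (hftc₂ : ∀ t, t₀ ≤ t → x₂ t = x₂ t₀ + ∫ s in t₀..t, x₂' s)
    (hincl₁ : ∀ᵐ t, t₀ ≤ t → ∀ c ∈ C t,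
      (inner ℝ (-x₁' t - f t (x₁ t)) (c - x₁ t) : ℝ) ≤ 0)
    (hincl₂ : ∀ᵐ t, t₀ ≤ t → ∀ c ∈ C t,
      (inner ℝ (-x₂' t - f t (x₂ t)) (c - x₂ t) : ℝ) ≤ 0) :
    ∀ t, t₀ ≤ t → ‖x₁ t - x₂ t‖ ^ 2 ≤
      Real.exp (-2 * α * (t - t₀)) * ‖x₁ t₀ - x₂ t₀‖ ^ 2 :=
  stmt16_general n α t₀ f C hmono x₁ x₂ x₁' x₂' hmem₁ hmem₂ hint₁ hint₂ hderiv₁ hderiv₂ hftc₁ hftc₂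
    hincl₁ hincl₂
end
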